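/- arXiv:1605.03722 — 7 statements merged into one kernel-verified Lean document; each statement's English description precedes it below -/
import Mathlib

section
/- Let I = [0,a], let f : I → ℝ be superterzatic, and let p_{ij} > 0 (i = 1,…,k, j = 1,…,n_i) with ∑_{j=1}^{n_i} p_{ij} = 1 for each i, let x_{ij} ∈ I, and let q_i > 0 with ∑_{i=1}^k q_i = 1. Put x̄ = ∑_{i=1}^k q_i ∑_{j=1}^{n_i} p_{ij} x_{ij}. Then the generalized Jensen functional satisfies J_k(f, p_1,…,p_k, q, x_1,…,x_k) ≥ ∑_{j_1,…,j_k=1}^{n_1,…,n_k} p_{1j_1}⋯p_{kj_k} · (∑_{i=1}^k q_i x_{ij_i}) · [ (∑_{i=1}^k q_i x_{ij_i} − x̄) C(x̄) + f(|∑_{i=1}^k q_i x_{ij_i} − x̄|)/|∑_{i=1}^k q_i x_{ij_i} − x̄| ], where C(x̄) is the constant provided by superterzaticity of f at x̄. -/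
open Finset

/-- `SuperterzaticWith a f C` : the function `f` is superterzatic on `I = [0,a]`,
with `C x̄` the constant provided at each point `x̄ ∈ I`. -/
def SuperterzaticWith (a : ℝ) (f : ℝ → ℝ) (C : ℝ → ℝ) : Prop :=
  ∀ xbar ∈ Set.Icc (0 : ℝ) a, ∀ (n : ℕ) (x p : Fin n → ℝ),
    (∀ i, x i ∈ Set.Icc (0 : ℝ) a) → (∀ i, 0 ≤ p i) → (∑ i, p i = 1) →
    (∑ i, p i * x i = xbar) →
    ∑ i, p i * f (x i) - f xbar ≥
      ∑ i, p i * x i * ((x i - xbar) * C xbar + f |x i - xbar| / |x i - xbar|)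

/-- The generalized Jensen functional `J_k`. -/
noncomputable def genJensen (f : ℝ → ℝ) (k : ℕ) (n : Fin k → ℕ)
    (p x : ∀ i : Fin k, Fin (n i) → ℝ) (q : Fin k → ℝ) : ℝ :=
  ∑ j : ∀ i : Fin k, Fin (n i), (∏ i, p i (j i)) * f (∑ i, q i * x i (j i)) -
    f (∑ i, q i * ∑ j, p i j * x i j)


lemma convex_mem_Icc {ι : Type*} [Fintype ι] (a : ℝ) (w z : ι → ℝ)
    (hw : ∀ i, 0 ≤ w i) (hws : ∑ i, w i = 1) (hz : ∀ i, z i ∈ Set.Icc (0:ℝ) a) :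
    ∑ i, w i * z i ∈ Set.Icc (0:ℝ) a := by
  constructor
  · exact Finset.sum_nonneg fun i _ => mul_nonneg (hw i) (hz i).1
  · calc ∑ i, w i * z i ≤ ∑ i, w i * a :=
        Finset.sum_le_sum fun i _ => mul_le_mul_of_nonneg_left (hz i).2 (hw i)
      _ = a := by rw [← Finset.sum_mul, hws, one_mul]

lemma key_sum {k : ℕ} {n : Fin k → ℕ} (p : ∀ i : Fin k, Fin (n i) → ℝ)
    (hpsum : ∀ i, ∑ j, p i j = 1) (i : Fin k) (g : Fin (n i) → ℝ) :
    ∑ j : ∀ m : Fin k, Fin (n m), (∏ m, p m (j m)) * g (j i) = ∑ l, p i l * g l := by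
  have h1 : ∀ j : ∀ m : Fin k, Fin (n m),
      (∏ m, p m (j m)) * g (j i) =
        ∏ m, (p m (j m) * if h : m = i then g (h ▸ j m) else 1) := by
    intro j
    rw [Finset.prod_mul_distrib]
    congr 1
    rw [Finset.prod_eq_single i]
    · simp
    · intro m _ hm; rw [dif_neg hm]
    · simp
  simp_rw [h1]
  have h2 := Finset.prod_univ_sum (fun m => (univ : Finset (Fin (n m))))
    (fun m l => p m l * if h : m = i then g (h ▸ l) else 1)
  rw [Fintype.piFinset_univ] at h2
  rw [← h2]
  rw [Finset.prod_eq_single i]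
  · simp
  · intro m _ hm
    simp only [dif_neg hm, mul_one]
    exact hpsum m
  · simp

/-- Lemma 5: lower bound for the generalized Jensen functional of a
superterzatic function. -/
theorem genJensen_ge_of_superterzatic (a : ℝ) (f C : ℝ → ℝ)
    (hf : SuperterzaticWith a f C)
    (k : ℕ) (n : Fin k → ℕ) (p x : ∀ i : Fin k, Fin (n i) → ℝ) (q : Fin k → ℝ)
    (hp : ∀ i j, 0 < p i j) (hpsum : ∀ i, ∑ j, p i j = 1)
    (hx : ∀ i j, x i j ∈ Set.Icc (0 : ℝ) a)
    (hq : ∀ i, 0 < q i) (hqsum : ∑ i, q i = 1)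
    (xbar : ℝ) (hxbar : xbar = ∑ i, q i * ∑ j, p i j * x i j) :
    genJensen f k n p x q ≥
      ∑ j : ∀ i : Fin k, Fin (n i),
        (∏ i, p i (j i)) * (∑ i, q i * x i (j i)) *
          ((∑ i, q i * x i (j i) - xbar) * C xbar +
            f |∑ i, q i * x i (j i) - xbar| / |∑ i, q i * x i (j i) - xbar|) := by
  classical
  let y : (∀ i : Fin k, Fin (n i)) → ℝ := fun j => ∑ i, q i * x i (j i)
  let P : (∀ i : Fin k, Fin (n i)) → ℝ := fun j => ∏ i, p i (j i)
  have hPnn : ∀ j, 0 ≤ P j := fun j => Finset.prod_nonneg fun i _ => (hp i (j i)).le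
  have hPsum : ∑ j, P j = 1 := by
    have h2 := Finset.prod_univ_sum (fun m => (univ : Finset (Fin (n m)))) p
    rw [Fintype.piFinset_univ] at h2
    show ∑ j : ∀ i : Fin k, Fin (n i), ∏ i, p i (j i) = 1
    rw [← h2]
    simp [hpsum]
  have hymem : ∀ j, y j ∈ Set.Icc (0:ℝ) a := fun j =>
    convex_mem_Icc a q (fun i => x i (j i)) (fun i => (hq i).le) hqsum (fun i => hx i (j i))
  have hPy : ∑ j, P j * y j = xbar := by
    rw [hxbar]
    have h3 : ∀ j : ∀ m : Fin k, Fin (n m), P j * y j = ∑ i, q i * (P j * x i (j i)) := by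
      intro j
      show (∏ i, p i (j i)) * (∑ i, q i * x i (j i)) = _
      rw [Finset.mul_sum]
      exact Finset.sum_congr rfl fun i _ => by ring
    simp_rw [h3]
    rw [Finset.sum_comm]
    refine Finset.sum_congr rfl fun i _ => ?_
    rw [← Finset.mul_sum, key_sum p hpsum i (x i)]
  have hxbarmem : xbar ∈ Set.Icc (0:ℝ) a := by
    rw [← hPy]; exact convex_mem_Icc a P y hPnn hPsum hymem
  let e := Fintype.equivFin (∀ i : Fin k, Fin (n i))
  have main := hf xbar hxbarmem (Fintype.card (∀ i : Fin k, Fin (n i)))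
    (fun t => y (e.symm t)) (fun t => P (e.symm t))
    (fun t => hymem _) (fun t => hPnn _)
    (by rw [Equiv.sum_comp e.symm P]; exact hPsum)
    (by rw [Equiv.sum_comp e.symm (fun j => P j * y j)]; exact hPy)
  have h1 : ∑ t, P (e.symm t) * f (y (e.symm t)) = ∑ j, P j * f (y j) :=
    Equiv.sum_comp e.symm (fun j => P j * f (y j))
  have h2 : ∑ t, P (e.symm t) * y (e.symm t) * ((y (e.symm t) - xbar) * C xbar +
        f |y (e.symm t) - xbar| / |y (e.symm t) - xbar|) =
      ∑ j, P j * y j * ((y j - xbar) * C xbar + f |y j - xbar| / |y j - xbar|) :=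
    Equiv.sum_comp e.symm
      (fun j => P j * y j * ((y j - xbar) * C xbar + f |y j - xbar| / |y j - xbar|))
  rw [h1, h2] at main
  show (∑ j : ∀ i : Fin k, Fin (n i), P j * f (y j)) - f (∑ i, q i * ∑ j, p i j * x i j) ≥
    ∑ j : ∀ i : Fin k, Fin (n i), P j * y j * ((y j - xbar) * C xbar +
      f |y j - xbar| / |y j - xbar|)
  rw [← hxbar]
  exact main
end

section
/- Let I = [0,a], let f : I → ℝ be superterzatic, let p_{ij} > 0 and r_{ij} > 0 (i = 1,…,k, j = 1,…,n_i) with ∑_{j=1}^{n_i} p_{ij} = ∑_{j=1}^{n_i} r_{ij} = 1 for each i, let x_{ij} ∈ I, and let q_i > 0 with ∑_{i=1}^k q_i = 1. Set m = min over all (j_1,…,j_k) of (p_{1j_1}⋯p_{kj_k})/(r_{1j_1}⋯r_{kj_k}), and x̄ = ∑_{i=1}^k q_i ∑_{j=1}^{n_i} p_{ij} x_{ij}. Then J_k(f, p_1,…,p_k, q, x_1,…,x_k) − m·J_k(f, r_1,…,r_k, q, x_1,…,x_k) ≥ ∑_{j_1,…,j_k} (p_{1j_1}⋯p_{kj_k}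 − m r_{1j_1}⋯r_{kj_k}) (∑_i q_i x_{ij_i}) [ (∑_i q_i x_{ij_i} − x̄) C(x̄) + f(|∑_i q_i x_{ij_i} − x̄|)/|∑_i q_i x_{ij_i} − x̄| ] + m (∑_i q_i ∑_j r_{ij} x_{ij}) [ (∑_i q_i ∑_j (r_{ij} − p_{ij}) x_{ij}) C(x̄) + f(|∑_i q_i ∑_j (r_{ij} − p_{ij}) x_{ij}|)/|∑_i q_i ∑_j (r_{ij} − p_{ij}) x_{ij}| ], where C(x̄) is the constant provided by superterzaticity of f at x̄. -/
open Finset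

theorem sum_mul_mem_Icc {ι : Type*} [Fintype ι] {w z : ι → ℝ} {a b : ℝ} (hw : ∀ i, 0 ≤ w i)
    (hw1 : ∑ i, w i = 1) (hz : ∀ i, z i ∈ Set.Icc a b) : ∑ i, w i * z i ∈ Set.Icc a b := by
  simpa using (convex_Icc a b).sum_mem (fun i _ => hw i) hw1 fun i _ => hz i

theorem Fintype.sum_pi_prod_mul_apply {ι R : Type*} [CommSemiring R] [Fintype ι] [DecidableEq ι]
    {κ : ι → Type*} [∀ i, Fintype (κ i)] (w : ∀ i, κ i → R) (hw : ∀ i, ∑ t, w i t = 1)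
    (i : ι) (g : κ i → R) :
    ∑ j : ∀ l, κ l, (∏ l, w l (j l)) * g (j i) = ∑ t, w i t * g t := by
  set v : κ i → R := fun t => w i t * g t
  have hterm (j : ∀ l, κ l) :
      ∏ l, Function.update w i v l (j l) = (∏ l, w l (j l)) * g (j i) := by
    simp_rw [Function.apply_update (fun l (h : κ l → R) => h (j l)),
      prod_update_of_mem (mem_univ i), prod_eq_mul_prod_sdiff_singleton_of_mem (mem_univ i)
        (fun l => w l (j l))]
    ring
  have hmarg : ∏ l, ∑ t, Function.update w i v l t = ∑ t, v t := by
    simp_rw [Function.apply_update (fun l (h : κ l → R) => ∑ t, h t), hw,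
      prod_update_of_mem (mem_univ i), prod_const_one, mul_one]
  simp_rw [← hterm, ← Fintype.prod_sum, hmarg]

theorem Fintype.sum_pi_prod_mul_sum {ι R : Type*} [CommSemiring R] [Fintype ι] [DecidableEq ι]
    {κ : ι → Type*} [∀ i, Fintype (κ i)] (w : ∀ i, κ i → R) (hw : ∀ i, ∑ t, w i t = 1)
    (q : ι → R) (x : ∀ i, κ i → R) :
    ∑ j : ∀ l, κ l, (∏ l, w l (j l)) * ∑ i, q i * x i (j i) = ∑ i, q i * ∑ t, w i t * x i t := by
  simp_rw [mul_sum]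
  rw [sum_comm]
  refine Finset.sum_congr rfl fun i _ => ?_
  simp_rw [mul_left_comm _ (q i), ← mul_sum]
  rw [Fintype.sum_pi_prod_mul_apply w hw i (x i)]

namespace SuperterzaticWith

variable {a : ℝ} {f C : ℝ → ℝ}

theorem of_fintype (hf : SuperterzaticWith a f C) {ι : Type*} [Fintype ι] {x p : ι → ℝ}
    {xbar : ℝ} (hx : ∀ i, x i ∈ Set.Icc 0 a) (hp : ∀ i, 0 ≤ p i) (hpsum : ∑ i, p i = 1)
    (hmean : ∑ i, p i * x i = xbar) :
    ∑ i, p i * f (x i) - f xbar ≥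
      ∑ i, p i * x i * ((x i - xbar) * C xbar + f |x i - xbar| / |x i - xbar|) := by
  have hxbar : xbar ∈ Set.Icc 0 a := hmean ▸ sum_mul_mem_Icc hp hpsum hx
  let e := (Fintype.equivFin ι).symm
  have h := hf xbar hxbar _ (x ∘ e) (p ∘ e) (fun _ => hx _) (fun _ => hp _)
    ((e.sum_comp p).trans hpsum) ((e.sum_comp fun i => p i * x i).trans hmean)
  convert h using 3 <;> exact (e.sum_comp _).symm

theorem of_fintype_add_point (hf : SuperterzaticWith a f C) {ι : Type*} [Fintype ι] {z w : ι → ℝ}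
    {y μ xbar : ℝ} (hz : ∀ j, z j ∈ Set.Icc 0 a) (hy : y ∈ Set.Icc 0 a) (hw : ∀ j, 0 ≤ w j)
    (hμ : 0 ≤ μ) (hsum : ∑ j, w j + μ = 1) (hmean : ∑ j, w j * z j + μ * y = xbar) :
    ∑ j, w j * f (z j) + μ * f y - f xbar ≥
      ∑ j, w j * z j * ((z j - xbar) * C xbar + f |z j - xbar| / |z j - xbar|) +
        μ * y * ((y - xbar) * C xbar + f |y - xbar| / |y - xbar|) := by
  have h := hf.of_fintype (x := fun o => o.elim y z) (p := fun o => o.elim μ w)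
    (Option.rec hy hz) (Option.rec hμ hw) (by simpa [Fintype.sum_option, add_comm] using hsum)
    (by simpa [Fintype.sum_option, add_comm] using hmean)
  simpa only [Fintype.sum_option, Option.elim, add_comm] using h

end SuperterzaticWith

/-- Theorem 6, first inequality. -/
theorem genJensen_sub_min_smul_ge (a : ℝ) (f C : ℝ → ℝ)
    (hf : SuperterzaticWith a f C)
    (k : ℕ) (n : Fin k → ℕ) (p r x : ∀ i : Fin k, Fin (n i) → ℝ) (q : Fin k → ℝ)
    (hp : ∀ i j, 0 < p i j) (hpsum : ∀ i, ∑ j, p i j = 1)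
    (hr : ∀ i j, 0 < r i j) (hrsum : ∀ i, ∑ j, r i j = 1)
    (hx : ∀ i j, x i j ∈ Set.Icc (0 : ℝ) a)
    (hq : ∀ i, 0 < q i) (hqsum : ∑ i, q i = 1)
    (m : ℝ)
    (hm : IsLeast {v : ℝ | ∃ j : ∀ i : Fin k, Fin (n i),
      v = (∏ i, p i (j i)) / (∏ i, r i (j i))} m)
    (xbar : ℝ) (hxbar : xbar = ∑ i, q i * ∑ j, p i j * x i j) :
    genJensen f k n p x q - m * genJensen f k n r x q ≥
      (∑ j : ∀ i : Fin k, Fin (n i),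
        ((∏ i, p i (j i)) - m * ∏ i, r i (j i)) * (∑ i, q i * x i (j i)) *
          ((∑ i, q i * x i (j i) - xbar) * C xbar +
            f |∑ i, q i * x i (j i) - xbar| / |∑ i, q i * x i (j i) - xbar|))
      + m * (∑ i, q i * ∑ j, r i j * x i j) *
          ((∑ i, q i * ∑ j, (r i j - p i j) * x i j) * C xbar +
            f |∑ i, q i * ∑ j, (r i j - p i j) * x i j| /
              |∑ i, q i * ∑ j, (r i j - p i j) * x i j|) := by
  obtain ⟨⟨j₀, hj₀⟩, hmin⟩ := hm
  set X : (∀ i : Fin k, Fin (n i)) → ℝ := fun j => ∑ i, q i * x i (j i)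
  set y := ∑ i, q i * ∑ j, r i j * x i j
  have hR : ∀ j : ∀ i : Fin k, Fin (n i), 0 < ∏ i, r i (j i) :=
    fun j => prod_pos fun i _ => hr i (j i)
  have hm0 : 0 ≤ m := hj₀ ▸ div_nonneg (prod_nonneg fun i _ => (hp i _).le) (hR j₀).le
  have hw : ∀ j : ∀ i : Fin k, Fin (n i), 0 ≤ (∏ i, p i (j i)) - m * ∏ i, r i (j i) :=
    fun j => sub_nonneg.2 ((le_div_iff₀ (hR j)).1 (hmin ⟨j, rfl⟩))
  have hX : ∀ j, X j ∈ Set.Icc 0 a := fun j => sum_mul_mem_Icc (fun i => (hq i).le) hqsum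
    fun i => hx i (j i)
  have hy : y ∈ Set.Icc 0 a := sum_mul_mem_Icc (fun i => (hq i).le) hqsum
    fun i => sum_mul_mem_Icc (fun j => (hr i j).le) (hrsum i) (hx i)
  have hPsum : ∑ j : ∀ i : Fin k, Fin (n i), ∏ i, p i (j i) = 1 := by
    simp [← Fintype.prod_sum, hpsum]
  have hRsum : ∑ j : ∀ i : Fin k, Fin (n i), ∏ i, r i (j i) = 1 := by
    simp [← Fintype.prod_sum, hrsum]
  have hPX : ∑ j, (∏ i, p i (j i)) * X j = xbar :=
    (Fintype.sum_pi_prod_mul_sum p hpsum q x).trans hxbar.symm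
  have hRX : ∑ j, (∏ i, r i (j i)) * X j = y := Fintype.sum_pi_prod_mul_sum r hrsum q x
  have key := hf.of_fintype_add_point hX hy hw hm0
    (by rw [sum_sub_distrib, ← mul_sum, hPsum, hRsum]; ring)
    (by simp only [sub_mul, sum_sub_distrib, mul_assoc, ← mul_sum, hPX, hRX]; ring)
  have hdiff : ∑ i, q i * ∑ j, (r i j - p i j) * x i j = y - xbar := by
    simp only [sub_mul, sum_sub_distrib, mul_sub, hxbar, y]
  have hsplit : ∑ j, ((∏ i, p i (j i)) - m * ∏ i, r i (j i)) * f (X j) =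
      ∑ j, (∏ i, p i (j i)) * f (X j) - m * ∑ j, (∏ i, r i (j i)) * f (X j) := by
    simp only [sub_mul, sum_sub_distrib, mul_assoc, ← mul_sum]
  rw [hdiff]
  simp only [genJensen, ← hxbar]
  linarith
end

section
/- Let I = [0,a], let f : I → ℝ be superterzatic, let x₁,…,xₙ ∈ I, let p,r ∈ (0,1)ⁿ with ∑pᵢ = ∑rᵢ = 1, and let q₁,…,q_k > 0 with ∑q_j = 1. Set m = min over all (i_1,…,i_k) ∈ {1,…,n}^k of (p_{i_1}⋯p_{i_k})/(r_{i_1}⋯r_{i_k}), define J_k(f,p,q,x) = ∑_{i_1,…,i_k=1}^n p_{i_1}⋯p_{i_k} f(∑_{j=1}^k q_j x_{i_j}) − f(∑_{i=1}^n p_i x_i), and put x̄ = ∑_{i=1}^n p_i x_i. Then J_k(f,p,q,x) − m·J_k(f,r,q,x) ≥ ∑_{i_1,…,i_k=1}^n (p_{i_1}⋯p_{i_k} − m r_{i_1}⋯r_{i_k}) (∑_{j=1}^k q_j x_{i_j}) [ (∑_{j=1}^k q_j x_{i_j} − x̄) C(x̄) + f(|∑_{j=1}^k q_j x_{i_j}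 − x̄|)/|∑_{j=1}^k q_j x_{i_j} − x̄| ] + m (∑_{i=1}^n r_i x_i) [ (∑_{i=1}^n (r_i − p_i) x_i) C(x̄) + f(|∑_{i=1}^n (r_i − p_i) x_i|)/|∑_{i=1}^n (r_i − p_i) x_i| ], where C(x̄) is the constant provided by superterzaticity of f at x̄. -/
open Finset

lemma sum_prod_eq (k n : ℕ) (g : Fin k → Fin n → ℝ) :
    ∑ j : Fin k → Fin n, ∏ l, g l (j l) = ∏ l, ∑ i, g l i :=
  (Fintype.prod_sum g).symm

lemma sum_prod_mul (k n : ℕ) (p x : Fin n → ℝ) (q : Fin k → ℝ)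
    (hpsum : ∑ i, p i = 1) (hqsum : ∑ l, q l = 1) :
    ∑ j : Fin k → Fin n, (∏ l, p (j l)) * (∑ l, q l * x (j l)) = ∑ i, p i * x i := by
  have key : ∀ l₀ : Fin k,
      ∑ j : Fin k → Fin n, (∏ l, p (j l)) * (q l₀ * x (j l₀))
        = q l₀ * ∑ i, p i * x i := by
    intro l₀
    set g : Fin k → Fin n → ℝ :=
      fun l i => if l = l₀ then q l₀ * (p i * x i) else p i with hg
    have h1 : ∀ j : Fin k → Fin n,
        (∏ l, p (j l)) * (q l₀ * x (j l₀)) = ∏ l, g l (j l) := by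
      intro j
      have h2 : ∏ l, g l (j l)
          = (q l₀ * (p (j l₀) * x (j l₀))) * ∏ l ∈ univ.erase l₀, p (j l) := by
        rw [← Finset.mul_prod_erase univ (fun l => g l (j l)) (Finset.mem_univ l₀)]
        rw [show g l₀ (j l₀) = q l₀ * (p (j l₀) * x (j l₀)) from if_pos rfl]
        congr 1
        exact Finset.prod_congr rfl fun l hl => if_neg (Finset.mem_erase.1 hl).1
      rw [h2, ← Finset.mul_prod_erase univ (fun l => p (j l)) (Finset.mem_univ l₀)]
      ring
    have h3 : ∀ l : Fin k,
        (∑ i, g l i) = if l = l₀ then q l₀ * ∑ i, p i * x i else 1 := by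
      intro l
      by_cases h : l = l₀ <;> simp [hg, h, ← Finset.mul_sum, hpsum]
    calc ∑ j : Fin k → Fin n, (∏ l, p (j l)) * (q l₀ * x (j l₀))
        = ∑ j : Fin k → Fin n, ∏ l, g l (j l) :=
          Finset.sum_congr rfl fun j _ => h1 j
      _ = ∏ l, ∑ i, g l i := sum_prod_eq k n g
      _ = q l₀ * ∑ i, p i * x i := by
          rw [Finset.prod_congr rfl (fun l _ => h3 l), Finset.prod_ite_eq' univ l₀
            (fun _ => q l₀ * ∑ i, p i * x i)]
          simp
  calc ∑ j : Fin k → Fin n, (∏ l, p (j l)) * (∑ l, q l * x (j l))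
      = ∑ j : Fin k → Fin n, ∑ l₀, (∏ l, p (j l)) * (q l₀ * x (j l₀)) := by
        simp_rw [Finset.mul_sum]
    _ = ∑ l₀, ∑ j : Fin k → Fin n, (∏ l, p (j l)) * (q l₀ * x (j l₀)) :=
        Finset.sum_comm
    _ = ∑ l₀, q l₀ * ∑ i, p i * x i := by simp_rw [key]
    _ = ∑ i, p i * x i := by rw [← Finset.sum_mul, hqsum, one_mul]

lemma superterzatic_fintype {a : ℝ} {f C : ℝ → ℝ} (hf :
    ∀ xbar ∈ Set.Icc (0 : ℝ) a, ∀ (n : ℕ) (x p : Fin n → ℝ),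
    (∀ i, x i ∈ Set.Icc (0 : ℝ) a) → (∀ i, 0 ≤ p i) → (∑ i, p i = 1) →
    (∑ i, p i * x i = xbar) →
    ∑ i, p i * f (x i) - f xbar ≥
      ∑ i, p i * x i * ((x i - xbar) * C xbar + f |x i - xbar| / |x i - xbar|))
    {xbar : ℝ} (hxb : xbar ∈ Set.Icc (0 : ℝ) a)
    {ι : Type} [Fintype ι] (x p : ι → ℝ)
    (hx : ∀ i, x i ∈ Set.Icc (0 : ℝ) a) (hp : ∀ i, 0 ≤ p i)
    (hs : ∑ i, p i = 1) (hm : ∑ i, p i * x i = xbar) :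
    ∑ i, p i * f (x i) - f xbar ≥
      ∑ i, p i * x i * ((x i - xbar) * C xbar + f |x i - xbar| / |x i - xbar|) := by
  let e := (Fintype.equivFin ι).symm
  have := hf xbar hxb (Fintype.card ι) (x ∘ e) (p ∘ e)
    (fun i => hx (e i)) (fun i => hp (e i))
    (by rw [show ∑ i, (p ∘ e) i = ∑ i, p i from Equiv.sum_comp e p]; exact hs)
    (by rw [show ∑ i, (p ∘ e) i * (x ∘ e) i = ∑ i, p i * x i from
      Equiv.sum_comp e (fun i => p i * x i)]; exact hm)
  rwa [show ∑ i, (p ∘ e) i * f ((x ∘ e) i) = ∑ i, p i * f (x i) from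
      Equiv.sum_comp e (fun i => p i * f (x i)),
    show ∑ i, (p ∘ e) i * (x ∘ e) i * (((x ∘ e) i - xbar) * C xbar +
        f |(x ∘ e) i - xbar| / |(x ∘ e) i - xbar|)
      = ∑ i, p i * x i * ((x i - xbar) * C xbar + f |x i - xbar| / |x i - xbar|) from
      Equiv.sum_comp e (fun i => p i * x i * ((x i - xbar) * C xbar +
        f |x i - xbar| / |x i - xbar|))] at this

/-- The generalized Jensen functional `J_k(f, p, q, x)` of Corollary 7
(the case `p₁ = ⋯ = p_k = p`, `x₁ = ⋯ = x_k = x`). -/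
noncomputable def genJensenCor (f : ℝ → ℝ) (n k : ℕ)
    (p : Fin n → ℝ) (q : Fin k → ℝ) (x : Fin n → ℝ) : ℝ :=
  ∑ j : Fin k → Fin n, (∏ l, p (j l)) * f (∑ l, q l * x (j l)) -
    f (∑ i, p i * x i)

/-- Corollary 7, first inequality. -/
theorem genJensenCor_sub_min_smul_ge (a : ℝ) (f C : ℝ → ℝ)
    (hf : SuperterzaticWith a f C)
    (n k : ℕ) (x p r : Fin n → ℝ) (q : Fin k → ℝ)
    (hx : ∀ i, x i ∈ Set.Icc (0 : ℝ) a)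
    (hp : ∀ i, p i ∈ Set.Ioo (0 : ℝ) 1) (hpsum : ∑ i, p i = 1)
    (hr : ∀ i, r i ∈ Set.Ioo (0 : ℝ) 1) (hrsum : ∑ i, r i = 1)
    (hq : ∀ j, 0 < q j) (hqsum : ∑ j, q j = 1)
    (m : ℝ)
    (hm : IsLeast {v : ℝ | ∃ j : Fin k → Fin n,
      v = (∏ l, p (j l)) / (∏ l, r (j l))} m)
    (xbar : ℝ) (hxbar : xbar = ∑ i, p i * x i) :
    genJensenCor f n k p q x - m * genJensenCor f n k r q x ≥
      (∑ j : Fin k → Fin n,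
        ((∏ l, p (j l)) - m * ∏ l, r (j l)) * (∑ l, q l * x (j l)) *
          ((∑ l, q l * x (j l) - xbar) * C xbar +
            f |∑ l, q l * x (j l) - xbar| / |∑ l, q l * x (j l) - xbar|))
      + m * (∑ i, r i * x i) *
          ((∑ i, (r i - p i) * x i) * C xbar +
            f |∑ i, (r i - p i) * x i| / |∑ i, (r i - p i) * x i|) := by
  classical
  obtain ⟨⟨j₀, hj₀⟩, hleast⟩ := hm
  have hppos : ∀ j : Fin k → Fin n, 0 < ∏ l, p (j l) :=
    fun j => Finset.prod_pos fun l _ => (hp _).1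
  have hrpos : ∀ j : Fin k → Fin n, 0 < ∏ l, r (j l) :=
    fun j => Finset.prod_pos fun l _ => (hr _).1
  have hm0 : 0 ≤ m := by
    rw [hj₀]; exact (div_pos (hppos j₀) (hrpos j₀)).le
  have hwnn : ∀ j : Fin k → Fin n, 0 ≤ (∏ l, p (j l)) - m * ∏ l, r (j l) := by
    intro j
    rw [sub_nonneg]
    exact (le_div_iff₀ (hrpos j)).1 (hleast ⟨j, rfl⟩)
  have convIcc : ∀ {N : ℕ} (u v : Fin N → ℝ), (∀ i, 0 ≤ u i) → (∑ i, u i = 1) →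
      (∀ i, v i ∈ Set.Icc (0 : ℝ) a) → (∑ i, u i * v i) ∈ Set.Icc (0 : ℝ) a := by
    intro N u v hu hus hv
    constructor
    · exact Finset.sum_nonneg fun i _ => mul_nonneg (hu i) (hv i).1
    · calc ∑ i, u i * v i ≤ ∑ i, u i * a :=
          Finset.sum_le_sum fun i _ => mul_le_mul_of_nonneg_left (hv i).2 (hu i)
        _ = a := by rw [← Finset.sum_mul, hus, one_mul]
  have hxbarIcc : xbar ∈ Set.Icc (0 : ℝ) a :=
    hxbar ▸ convIcc p x (fun i => (hp i).1.le) hpsum hx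
  have hzIcc : (∑ i, r i * x i) ∈ Set.Icc (0 : ℝ) a :=
    convIcc r x (fun i => (hr i).1.le) hrsum hx
  have hyIcc : ∀ j : Fin k → Fin n, (∑ l, q l * x (j l)) ∈ Set.Icc (0 : ℝ) a :=
    fun j => convIcc q (fun l => x (j l)) (fun l => (hq l).le) hqsum
      (fun l => hx (j l))
  -- the big family
  set y : Option (Fin k → Fin n) → ℝ :=
    fun o => o.elim (∑ i, r i * x i) (fun j => ∑ l, q l * x (j l)) with hy
  set w : Option (Fin k → Fin n) → ℝ :=
    fun o => o.elim m (fun j => (∏ l, p (j l)) - m * ∏ l, r (j l)) with hw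
  have hsum_opt : ∀ g : Option (Fin k → Fin n) → ℝ,
      ∑ o, g o = g none + ∑ j, g (some j) := by
    intro g; simp [← Finset.sum_insertNone]
  have hPsum1 : ∑ j : Fin k → Fin n, ∏ l, p (j l) = 1 := by
    calc ∑ j : Fin k → Fin n, ∏ l, p (j l) = ∏ l : Fin k, ∑ i, p i :=
        sum_prod_eq k n fun _ i => p i
      _ = 1 := by simp [hpsum]
  have hRsum1 : ∑ j : Fin k → Fin n, ∏ l, r (j l) = 1 := by
    calc ∑ j : Fin k → Fin n, ∏ l, r (j l) = ∏ l : Fin k, ∑ i, r i :=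
        sum_prod_eq k n fun _ i => r i
      _ = 1 := by simp [hrsum]
  have hPmean := sum_prod_mul k n p x q hpsum hqsum
  have hRmean := sum_prod_mul k n r x q hrsum hqsum
  have hwsum : ∑ o, w o = 1 := by
    rw [hsum_opt]
    show m + ∑ j : Fin k → Fin n, ((∏ l, p (j l)) - m * ∏ l, r (j l)) = 1
    have e : ∑ j : Fin k → Fin n, ((∏ l, p (j l)) - m * ∏ l, r (j l))
        = (∑ j : Fin k → Fin n, ∏ l, p (j l))
          - m * ∑ j : Fin k → Fin n, ∏ l, r (j l) := by
      rw [Finset.mul_sum, ← Finset.sum_sub_distrib]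
    rw [e, hPsum1, hRsum1]; ring
  have hwmean : ∑ o, w o * y o = xbar := by
    rw [hsum_opt]
    show m * (∑ i, r i * x i) + ∑ j : Fin k → Fin n,
        ((∏ l, p (j l)) - m * ∏ l, r (j l)) * (∑ l, q l * x (j l)) = xbar
    have e : ∑ j : Fin k → Fin n,
        ((∏ l, p (j l)) - m * ∏ l, r (j l)) * (∑ l, q l * x (j l))
        = (∑ j : Fin k → Fin n, (∏ l, p (j l)) * (∑ l, q l * x (j l)))
          - m * ∑ j : Fin k → Fin n, (∏ l, r (j l)) * (∑ l, q l * x (j l)) := by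
      rw [Finset.mul_sum, ← Finset.sum_sub_distrib]
      exact Finset.sum_congr rfl fun j _ => by ring
    rw [e, hPmean, hRmean, hxbar]; ring
  have key := superterzatic_fintype hf hxbarIcc y w
    (fun o => match o with
      | none => hzIcc
      | some j => hyIcc j)
    (fun o => match o with
      | none => hm0
      | some j => hwnn j)
    hwsum hwmean
  rw [hsum_opt (fun o => w o * f (y o)),
    hsum_opt (fun o => w o * y o *
      ((y o - xbar) * C xbar + f |y o - xbar| / |y o - xbar|))] at key
  have key2 : m * f (∑ i, r i * x i) + (∑ j : Fin k → Fin n,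
        ((∏ l, p (j l)) - m * ∏ l, r (j l)) * f (∑ l, q l * x (j l))) - f xbar ≥
      m * (∑ i, r i * x i) *
        (((∑ i, r i * x i) - xbar) * C xbar +
          f |(∑ i, r i * x i) - xbar| / |(∑ i, r i * x i) - xbar|)
      + ∑ j : Fin k → Fin n,
        ((∏ l, p (j l)) - m * ∏ l, r (j l)) * (∑ l, q l * x (j l)) *
          ((∑ l, q l * x (j l) - xbar) * C xbar +
            f |∑ l, q l * x (j l) - xbar| / |∑ l, q l * x (j l) - xbar|) :=
    key
  have ediff : ∑ i, (r i - p i) * x i = (∑ i, r i * x i) - xbar := by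
    rw [hxbar, ← Finset.sum_sub_distrib]
    exact Finset.sum_congr rfl fun i _ => by ring
  rw [ediff]
  unfold genJensenCor
  rw [← hxbar]
  have eS1 : ∑ j : Fin k → Fin n,
      ((∏ l, p (j l)) - m * ∏ l, r (j l)) * f (∑ l, q l * x (j l))
      = (∑ j : Fin k → Fin n, (∏ l, p (j l)) * f (∑ l, q l * x (j l)))
        - m * ∑ j : Fin k → Fin n, (∏ l, r (j l)) * f (∑ l, q l * x (j l)) := by
    rw [Finset.mul_sum, ← Finset.sum_sub_distrib]
    exact Finset.sum_congr rfl fun j _ => by ring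
  linarith [key2, eS1]
end

section
/- Let I = [0,a], let f : I → ℝ be superterzatic, let x₁,…,xₙ ∈ I, let p,r ∈ (0,1)ⁿ with ∑pᵢ = ∑rᵢ = 1, and let q₁,…,q_k > 0 with ∑q_j = 1. Set M = max over all (i_1,…,i_k) ∈ {1,…,n}^k of (p_{i_1}⋯p_{i_k})/(r_{i_1}⋯r_{i_k}), define J_k(f,p,q,x) = ∑_{i_1,…,i_k=1}^n p_{i_1}⋯p_{i_k} f(∑_{j=1}^k q_j x_{i_j}) − f(∑_{i=1}^n p_i x_i), and put x̌ = ∑_{i=1}^n r_i x_i. Then M·J_k(f,r,q,x) − J_k(f,p,q,x) ≥ ∑_{i_1,…,i_k=1}^n (M r_{i_1}⋯r_{i_k} − p_{i_1}⋯p_{i_k}) (∑_{j=1}^k q_j x_{i_j}) [ (∑_{j=1}^k q_j x_{i_j} − x̌) C(x̌) + f(|∑_{j=1}^k q_j x_{i_j} − x̌|)/|∑_{j=1}^k q_j x_{i_j} − x̌| ] + (∑_{i=1}^n p_i x_i) [ (∑_{i=1}^n (p_i − r_i) x_i) C(x̌) + f(|∑_{i=1}^n (p_i − r_i) x_i|)/|∑_{i=1}^n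 (p_i − r_i) x_i| ], where C(x̌) is the constant provided by superterzaticity of f at x̌. -/
/-!
On the `k`-tuples `j`, the products `u j = ∏ r (j l)` and `v j = ∏ p (j l)` are probability
weights with `v ≤ M u`, and the points `y j = ∑ q l * x (j l)` have `u`-mean `x̌` and `v`-mean
`X = ∑ p i * x i`. The points `X` and `y j` with weights `1 / M` and `(M u j - v j) / M` have
mean `x̌`, so superterzaticity at `x̌` applies to them; multiplied by `M`, it is the inequality.
-/

open Finset

section ProductWeights

variable {ι κ : Type*} [Fintype ι] [DecidableEq ι] [Fintype κ] {p : κ → ℝ}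

theorem sum_pi_prod_eq_one (hp : ∑ i, p i = 1) : ∑ j : ι → κ, ∏ l, p (j l) = 1 := by
  rw [← Fintype.prod_sum (fun _ i => p i), hp, prod_const_one]

theorem sum_pi_prod_mul_apply (hp : ∑ i, p i = 1) (x : κ → ℝ) (l : ι) :
    ∑ j : ι → κ, (∏ l', p (j l')) * x (j l) = ∑ i, p i * x i := by
  have factor (j : ι → κ) :
      (∏ l', p (j l')) * x (j l) = ∏ l', p (j l') * (if l' = l then x (j l') else 1) := by
    rw [prod_mul_distrib, prod_ite_eq' univ l, if_pos (mem_univ l)]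
  simp only [factor, ← Fintype.prod_sum (fun l' i => p i * if l' = l then x i else 1)]
  rw [prod_eq_single l fun l' _ hl' => by simp [hl', hp]] <;> simp

theorem sum_pi_prod_mul_sum (hp : ∑ i, p i = 1) (x : κ → ℝ) {q : ι → ℝ}
    (hq : ∑ l, q l = 1) :
    ∑ j : ι → κ, (∏ l, p (j l)) * ∑ l, q l * x (j l) = ∑ i, p i * x i := by
  simp only [mul_sum, mul_left_comm _ (q _)]
  rw [sum_comm]
  simp only [← mul_sum, sum_pi_prod_mul_apply hp, ← sum_mul, hq, one_mul]

end ProductWeights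

-- At `z = xbar` the quotient is `f 0 / 0 = 0`, which is the paper's convention.
noncomputable def terzaticTerm (f C : ℝ → ℝ) (xbar z : ℝ) : ℝ :=
  (z - xbar) * C xbar + f |z - xbar| / |z - xbar|

namespace SuperterzaticWith

variable {a : ℝ} {f C : ℝ → ℝ} {ι : Type*} [Fintype ι]

theorem jensen_ge (hf : SuperterzaticWith a f C) {xbar : ℝ} (hxbar : xbar ∈ Set.Icc 0 a)
    {x p : ι → ℝ} (hx : ∀ i, x i ∈ Set.Icc 0 a) (hp : ∀ i, 0 ≤ p i) (hpsum : ∑ i, p i = 1)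
    (hmean : ∑ i, p i * x i = xbar) :
    ∑ i, p i * f (x i) - f xbar ≥ ∑ i, p i * x i * terzaticTerm f C xbar (x i) := by
  let e := (Fintype.equivFin ι).symm
  have h : ∑ t, p (e t) * f (x (e t)) - f xbar ≥
      ∑ t, p (e t) * x (e t) * terzaticTerm f C xbar (x (e t)) :=
    hf xbar hxbar _ (fun t => x (e t)) (fun t => p (e t)) (fun t => hx _) (fun t => hp _)
      (by rwa [e.sum_comp p]) (by rwa [e.sum_comp fun i => p i * x i])
  rwa [e.sum_comp fun i => p i * f (x i),
    e.sum_comp fun i => p i * x i * terzaticTerm f C xbar (x i)] at h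

theorem sum_mul_sub_ge (hf : SuperterzaticWith a f C) {xbar : ℝ} (hxbar : xbar ∈ Set.Icc 0 a)
    {x w : ι → ℝ} (hx : ∀ i, x i ∈ Set.Icc 0 a) (hw : ∀ i, 0 ≤ w i) (hwsum : 0 < ∑ i, w i)
    (hmean : ∑ i, w i * x i = (∑ i, w i) * xbar) :
    ∑ i, w i * f (x i) - (∑ i, w i) * f xbar ≥
      ∑ i, w i * x i * terzaticTerm f C xbar (x i) := by
  set W := ∑ i, w i
  have h := hf.jensen_ge hxbar hx (p := fun i => w i / W) (fun i => div_nonneg (hw i) hwsum.le)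
    (by rw [← sum_div, div_self hwsum.ne']) (by
      simp only [div_mul_eq_mul_div, ← sum_div, hmean, mul_div_cancel_left₀ _ hwsum.ne'])
  simp only [div_mul_eq_mul_div, ← sum_div] at h
  have := mul_le_mul_of_nonneg_left h hwsum.le
  rwa [mul_sub, mul_div_cancel₀ _ hwsum.ne', mul_div_cancel₀ _ hwsum.ne'] at this

theorem smul_jensen_sub_jensen_ge (hf : SuperterzaticWith a f C) {u v y : ι → ℝ}
    {M X xbar : ℝ} (hy : ∀ i, y i ∈ Set.Icc 0 a) (hX : X ∈ Set.Icc 0 a)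
    (hxbar : xbar ∈ Set.Icc 0 a) (husum : ∑ i, u i = 1) (hvsum : ∑ i, v i = 1)
    (hvu : ∀ i, v i ≤ M * u i) (humean : ∑ i, u i * y i = xbar)
    (hvmean : ∑ i, v i * y i = X) :
    M * (∑ i, u i * f (y i) - f xbar) - (∑ i, v i * f (y i) - f X) ≥
      ∑ i, (M * u i - v i) * y i * terzaticTerm f C xbar (y i) +
        X * terzaticTerm f C xbar X := by
  have hM : 1 ≤ M := by
    simpa [husum, hvsum, ← mul_sum] using sum_le_sum fun i (_ : i ∈ univ) => hvu i
  -- `X` joins the points `y i` with weight `1`, and the weights `M u - v` make `xbar` their mean.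
  have h := hf.sum_mul_sub_ge hxbar (ι := Option ι) (x := fun o => o.elim X y)
    (w := fun o => o.elim 1 fun i => M * u i - v i)
    (Option.rec hX hy) (Option.rec zero_le_one fun i => sub_nonneg.2 (hvu i))
  simp only [Fintype.sum_option, Option.elim, sum_sub_distrib, ← mul_sum, sub_mul, mul_assoc,
    husum, hvsum, humean, hvmean] at h
  simp only [sub_mul, sum_sub_distrib, mul_assoc, ← mul_sum]
  linarith [h (by linarith) (by ring)]

end SuperterzaticWith

/-- Corollary 7, second inequality. -/
theorem max_smul_genJensenCor_sub_ge (a : ℝ) (f C : ℝ → ℝ)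
    (hf : SuperterzaticWith a f C)
    (n k : ℕ) (x p r : Fin n → ℝ) (q : Fin k → ℝ)
    (hx : ∀ i, x i ∈ Set.Icc (0 : ℝ) a)
    (hp : ∀ i, p i ∈ Set.Ioo (0 : ℝ) 1) (hpsum : ∑ i, p i = 1)
    (hr : ∀ i, r i ∈ Set.Ioo (0 : ℝ) 1) (hrsum : ∑ i, r i = 1)
    (hq : ∀ j, 0 < q j) (hqsum : ∑ j, q j = 1)
    (M : ℝ)
    (hM : IsGreatest {v : ℝ | ∃ j : Fin k → Fin n,
      v = (∏ l, p (j l)) / (∏ l, r (j l))} M)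
    (xcheck : ℝ) (hxcheck : xcheck = ∑ i, r i * x i) :
    M * genJensenCor f n k r q x - genJensenCor f n k p q x ≥
      (∑ j : Fin k → Fin n,
        (M * (∏ l, r (j l)) - ∏ l, p (j l)) * (∑ l, q l * x (j l)) *
          ((∑ l, q l * x (j l) - xcheck) * C xcheck +
            f |∑ l, q l * x (j l) - xcheck| / |∑ l, q l * x (j l) - xcheck|))
      + (∑ i, p i * x i) *
          ((∑ i, (p i - r i) * x i) * C xcheck +
            f |∑ i, (p i - r i) * x i| / |∑ i, (p i - r i) * x i|) := by
  have convex_comb_mem {ι : Type} [Fintype ι] {w : ι → ℝ} {z : ι → ℝ} (hw : ∀ i, 0 ≤ w i)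
      (hwsum : ∑ i, w i = 1) (hz : ∀ i, z i ∈ Set.Icc (0 : ℝ) a) :
      ∑ i, w i * z i ∈ Set.Icc 0 a :=
    (convex_Icc 0 a).sum_mem (fun i _ => hw i) hwsum fun i _ => hz i
  have hpr (j : Fin k → Fin n) : ∏ l, p (j l) ≤ M * ∏ l, r (j l) :=
    (div_le_iff₀ (prod_pos fun l _ => (hr (j l)).1)).1 (hM.2 ⟨j, rfl⟩)
  have key := hf.smul_jensen_sub_jensen_ge
    (fun j => convex_comb_mem (fun l => (hq l).le) hqsum fun l => hx (j l))
    (convex_comb_mem (fun i => (hp i).1.le) hpsum hx)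
    (hxcheck ▸ convex_comb_mem (fun i => (hr i).1.le) hrsum hx)
    (sum_pi_prod_eq_one hrsum) (sum_pi_prod_eq_one hpsum) hpr
    (hxcheck ▸ sum_pi_prod_mul_sum hrsum x hqsum) (sum_pi_prod_mul_sum hpsum x hqsum)
  have hdiff : ∑ i, (p i - r i) * x i = ∑ i, p i * x i - xcheck := by
    simp only [sub_mul, sum_sub_distrib, hxcheck]
  rw [genJensenCor, genJensenCor, ← hxcheck, hdiff]
  exact key
end

section
/- Let I = [0,a], let f : I → ℝ be superterzatic, let x₁,…,xₙ ∈ I, and let p₁,…,pₙ ∈ (0,1) and r₁,…,rₙ ∈ (0,1) with ∑pᵢ = ∑rᵢ = 1. Set m = min_{1≤i≤n} pᵢ/rᵢ and x̄ = ∑_{i=1}^n pᵢ xᵢ. Then J(f,p,x) − m·J(f,r,x) ≥ ∑_{i=1}^n (pᵢ − m rᵢ) xᵢ [ (xᵢ − x̄) C(x̄) + f(|xᵢ − x̄|)/|xᵢ − x̄| ] + m (∑_{i=1}^n rᵢ xᵢ) [ (∑_{i=1}^n (rᵢ − pᵢ) xᵢ) C(x̄) + f(|∑_{i=1}^n (rᵢ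 − pᵢ) xᵢ|)/|∑_{i=1}^n (rᵢ − pᵢ) xᵢ| ], where C(x̄) is the constant provided by superterzaticity of f at x̄. -/
open Finset

/-- The Jensen functional `J(f, p, x)`. -/
noncomputable def jensenFunctional (f : ℝ → ℝ) {n : ℕ} (p x : Fin n → ℝ) : ℝ :=
  ∑ i, p i * f (x i) - f (∑ i, p i * x i)

/-- Corollary 8, first inequality. -/
theorem jensen_sub_min_smul_ge (a : ℝ) (f C : ℝ → ℝ)
    (hf : SuperterzaticWith a f C)
    (n : ℕ) (x p r : Fin n → ℝ)
    (hx : ∀ i, x i ∈ Set.Icc (0 : ℝ) a)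
    (hp : ∀ i, p i ∈ Set.Ioo (0 : ℝ) 1) (hpsum : ∑ i, p i = 1)
    (hr : ∀ i, r i ∈ Set.Ioo (0 : ℝ) 1) (hrsum : ∑ i, r i = 1)
    (m : ℝ) (hm : IsLeast {v : ℝ | ∃ i : Fin n, v = p i / r i} m)
    (xbar : ℝ) (hxbar : xbar = ∑ i, p i * x i) :
    jensenFunctional f p x - m * jensenFunctional f r x ≥
      (∑ i, (p i - m * r i) * x i *
        ((x i - xbar) * C xbar + f |x i - xbar| / |x i - xbar|))
      + m * (∑ i, r i * x i) *
          ((∑ i, (r i - p i) * x i) * C xbar +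
            f |∑ i, (r i - p i) * x i| / |∑ i, (r i - p i) * x i|) := by
  obtain ⟨⟨j, hj⟩, hlb⟩ := hm
  have hm0 : 0 ≤ m := hj ▸ div_nonneg (hp j).1.le (hr j).1.le
  have hmr : ∀ i, m * r i ≤ p i := by
    intro i
    have h := hlb ⟨i, rfl⟩
    exact (le_div_iff₀ (hr i).1).mp h
  set S := ∑ i, r i * x i with hS
  have hmean_bound : ∀ (q : Fin n → ℝ), (∀ i, 0 ≤ q i) → (∑ i, q i = 1) →
      (∑ i, q i * x i) ∈ Set.Icc (0 : ℝ) a := by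
    intro q hq hqs
    constructor
    · exact Finset.sum_nonneg fun i _ => mul_nonneg (hq i) (hx i).1
    · calc ∑ i, q i * x i ≤ ∑ i, q i * a :=
            Finset.sum_le_sum fun i _ => mul_le_mul_of_nonneg_left (hx i).2 (hq i)
        _ = a := by rw [← Finset.sum_mul, hqs, one_mul]
  have hxbar_mem : xbar ∈ Set.Icc (0 : ℝ) a := by
    rw [hxbar]; exact hmean_bound p (fun i => (hp i).1.le) hpsum
  have hS_mem : S ∈ Set.Icc (0 : ℝ) a :=
    hmean_bound r (fun i => (hr i).1.le) hrsum
  set x' : Fin (n + 1) → ℝ := Fin.snoc x S with hx'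
  set p' : Fin (n + 1) → ℝ := Fin.snoc (fun i => p i - m * r i) m with hp'
  have key := hf xbar hxbar_mem (n + 1) x' p'
    (by
      intro i
      refine Fin.lastCases ?_ ?_ i
      · simpa [hx', Fin.snoc_last] using hS_mem
      · intro k; simpa [hx', Fin.snoc_castSucc] using hx k)
    (by
      intro i
      refine Fin.lastCases ?_ ?_ i
      · simpa [hp', Fin.snoc_last] using hm0
      · intro k; simpa [hp', Fin.snoc_castSucc] using sub_nonneg.mpr (hmr k))
    (by
      rw [Fin.sum_univ_castSucc]
      simp only [hp', Fin.snoc_castSucc, Fin.snoc_last]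
      rw [Finset.sum_sub_distrib, hpsum, ← Finset.mul_sum, hrsum]
      ring)
    (by
      rw [Fin.sum_univ_castSucc]
      simp only [hp', hx', Fin.snoc_castSucc, Fin.snoc_last]
      have : ∀ i, (p i - m * r i) * x i = p i * x i - m * (r i * x i) := by
        intro i; ring
      rw [Finset.sum_congr rfl fun i _ => this i, Finset.sum_sub_distrib,
        ← Finset.mul_sum, hxbar]
      ring)
  rw [Fin.sum_univ_castSucc, Fin.sum_univ_castSucc] at key
  simp only [hp', hx', Fin.snoc_castSucc, Fin.snoc_last] at key
  have hSx : S - xbar = ∑ i, (r i - p i) * x i := by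
    rw [hS, hxbar, ← Finset.sum_sub_distrib]
    exact Finset.sum_congr rfl fun i _ => by ring
  rw [hSx] at key
  have hfp : ∑ i, (p i - m * r i) * f (x i)
      = ∑ i, p i * f (x i) - m * ∑ i, r i * f (x i) := by
    rw [Finset.mul_sum, ← Finset.sum_sub_distrib]
    exact Finset.sum_congr rfl fun i _ => by ring
  rw [hfp] at key
  simp only [jensenFunctional, ← hxbar, ← hS]
  linarith [key]
end

section
/- Let I = [0,a], let f : I → ℝ be superterzatic, let x₁,…,xₙ ∈ I, and let p₁,…,pₙ ∈ (0,1) and r₁,…,rₙ ∈ (0,1) with ∑pᵢ = ∑rᵢ = 1. Set M = max_{1≤i≤n} pᵢ/rᵢ and x̌ = ∑_{i=1}^n rᵢ xᵢ. Then M·J(f,r,x) − J(f,p,x) ≥ ∑_{i=1}^n (M rᵢ − pᵢ) xᵢ [ (xᵢ − x̌) C(x̌) + f(|xᵢ − x̌|)/|xᵢ − x̌| ] + (∑_{i=1}^n pᵢ xᵢ) [ (∑_{i=1}^n (pᵢ − rᵢ) xᵢ) C(x̌) + f(|∑_{i=1}^n (pᵢ − rᵢ) xᵢ|)/|∑_{i=1}^n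 (pᵢ − rᵢ) xᵢ| ], where C(x̌) is the constant provided by superterzaticity of f at x̌. -/
open Finset

/-! The weights `M rᵢ - pᵢ` are nonnegative by the choice of `M`; together with weight `1` on the
extra point `∑ pᵢ xᵢ` they have total mass `M` and barycentre `x̌`. Superterzaticity at `x̌`,
applied to these weights normalized by `M`, gives the inequality after multiplying back by `M`,
since `∑ (pᵢ - rᵢ) xᵢ = ∑ pᵢ xᵢ - x̌`. -/

namespace SuperterzaticWith

variable {a : ℝ} {f C : ℝ → ℝ}

theorem sum_mul_sub_mul_ge (hf : SuperterzaticWith a f C) {n : ℕ} {x w : Fin n → ℝ}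
    (hx : ∀ i, x i ∈ Set.Icc 0 a) (hw : ∀ i, 0 ≤ w i) (hmass : 0 < ∑ i, w i) {xbar : ℝ}
    (hmean : ∑ i, w i * x i = (∑ i, w i) * xbar) :
    ∑ i, w i * f (x i) - (∑ i, w i) * f xbar ≥
      ∑ i, w i * x i * ((x i - xbar) * C xbar + f |x i - xbar| / |x i - xbar|) := by
  set m := ∑ i, w i
  have hsum : ∑ i, w i / m = 1 := by rw [← Finset.sum_div, div_self hmass.ne']
  have hbar : ∑ i, w i / m * x i = xbar := by
    simp_rw [div_mul_eq_mul_div, ← Finset.sum_div, hmean]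
    field_simp
  have hxbar : xbar ∈ Set.Icc 0 a :=
    hbar ▸ (convex_Icc 0 a).sum_mem (fun i _ => div_nonneg (hw i) hmass.le) hsum
      (fun i _ => hx i)
  have key := mul_le_mul_of_nonneg_left
    (hf xbar hxbar n x (fun i => w i / m) hx (fun i => div_nonneg (hw i) hmass.le) hsum hbar).le
    hmass.le
  simpa only [mul_sub, Finset.mul_sum, ← mul_assoc, mul_div_cancel₀ _ hmass.ne'] using key

theorem sum_add_mul_sub_mul_ge (hf : SuperterzaticWith a f C) {n : ℕ} {x w : Fin n → ℝ}
    {y c xbar : ℝ} (hx : ∀ i, x i ∈ Set.Icc 0 a) (hy : y ∈ Set.Icc 0 a) (hw : ∀ i, 0 ≤ w i)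
    (hc : 0 ≤ c) (hmass : 0 < ∑ i, w i + c)
    (hmean : ∑ i, w i * x i + c * y = (∑ i, w i + c) * xbar) :
    ∑ i, w i * f (x i) + c * f y - (∑ i, w i + c) * f xbar ≥
      ∑ i, w i * x i * ((x i - xbar) * C xbar + f |x i - xbar| / |x i - xbar|) +
        c * y * ((y - xbar) * C xbar + f |y - xbar| / |y - xbar|) := by
  have key := hf.sum_mul_sub_mul_ge (x := Fin.snoc x y) (w := Fin.snoc w c)
    (Fin.lastCases (by simpa using hy) (by simpa using hx))
    (Fin.lastCases (by simpa using hc) (by simpa using hw))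
    (by simpa [Fin.sum_univ_castSucc] using hmass)
    (by simpa [Fin.sum_univ_castSucc] using hmean)
  simpa only [Fin.sum_univ_castSucc, Fin.snoc_castSucc, Fin.snoc_last] using key

end SuperterzaticWith

/-- Corollary 8, second inequality. -/
theorem max_smul_jensen_sub_ge (a : ℝ) (f C : ℝ → ℝ)
    (hf : SuperterzaticWith a f C)
    (n : ℕ) (x p r : Fin n → ℝ)
    (hx : ∀ i, x i ∈ Set.Icc (0 : ℝ) a)
    (hp : ∀ i, p i ∈ Set.Ioo (0 : ℝ) 1) (hpsum : ∑ i, p i = 1)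
    (hr : ∀ i, r i ∈ Set.Ioo (0 : ℝ) 1) (hrsum : ∑ i, r i = 1)
    (M : ℝ) (hM : IsGreatest {v : ℝ | ∃ i : Fin n, v = p i / r i} M)
    (xcheck : ℝ) (hxcheck : xcheck = ∑ i, r i * x i) :
    M * jensenFunctional f r x - jensenFunctional f p x ≥
      (∑ i, (M * r i - p i) * x i *
        ((x i - xcheck) * C xcheck + f |x i - xcheck| / |x i - xcheck|))
      + (∑ i, p i * x i) *
          ((∑ i, (p i - r i) * x i) * C xcheck +
            f |∑ i, (p i - r i) * x i| / |∑ i, (p i - r i) * x i|) := by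
  obtain ⟨⟨i₀, hMi₀⟩, hMub⟩ := hM
  have hM : 0 < M := hMi₀ ▸ div_pos (hp i₀).1 (hr i₀).1
  have hw : ∀ i, 0 ≤ M * r i - p i := fun i => by
    linarith [(div_le_iff₀ (hr i).1).1 (hMub ⟨i, rfl⟩)]
  have hmass : ∑ i, (M * r i - p i) + 1 = M := by
    rw [Finset.sum_sub_distrib, ← Finset.mul_sum, hrsum, hpsum]; ring
  have hP : ∑ i, p i * x i ∈ Set.Icc 0 a :=
    (convex_Icc 0 a).sum_mem (fun i _ => (hp i).1.le) hpsum (fun i _ => hx i)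
  have key := hf.sum_add_mul_sub_mul_ge (xbar := xcheck) hx hP hw zero_le_one (by rwa [hmass]) (by
    rw [hmass, hxcheck]
    simp only [sub_mul, Finset.sum_sub_distrib, mul_assoc]
    rw [← Finset.mul_sum]
    ring)
  have hsplit : ∑ i, (M * r i - p i) * f (x i) = M * ∑ i, r i * f (x i) - ∑ i, p i * f (x i) := by
    rw [Finset.mul_sum, ← Finset.sum_sub_distrib]
    simp only [sub_mul, mul_assoc]
  have hdiff : ∑ i, (p i - r i) * x i = ∑ i, p i * x i - xcheck := by
    rw [hxcheck, ← Finset.sum_sub_distrib]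
    simp only [sub_mul]
  rw [hmass, hsplit, one_mul, one_mul] at key
  rw [hdiff, jensenFunctional, jensenFunctional, ← hxcheck]
  linarith
end

section
/- The function g on I = [0,a] defined by g(x) = x³ log(1/x) for x > 0 and g(0) = 0 is subterzatic: for each x̄ ∈ I there exists a real number C(x̄) such that for all n, all x₁,…,xₙ ∈ I and all weights p₁,…,pₙ ≥ 0 with ∑pᵢ = 1 and x̄ = ∑pᵢxᵢ, one has J(g,p,x) ≤ ∑ᵢ pᵢ xᵢ [(xᵢ − x̄)C(x̄) + g(|xᵢ − x̄|)/|xᵢ − x̄|] (with the convention g(0)/0 = 0). -/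
open Finset

/-- The function `g(x) = x³ log(1/x)` for `x ≠ 0`, with `g(0) = 0`. -/
noncomputable def cubeLogInv : ℝ → ℝ :=
  fun t => if t = 0 then 0 else t ^ 3 * Real.log (1 / t)

lemma cubeLogInv_pos_eq {t : ℝ} (ht : t ≠ 0) :
    cubeLogInv t = -(t ^ 3 * Real.log t) := by
  simp [cubeLogInv, ht, one_div, Real.log_inv]

lemma cubeLogInv_pointwise (a u : ℝ) (hu : 0 < u) (hua : u ≤ a)
    (t : ℝ) (ht0 : 0 ≤ t) (hta : t ≤ a) :
    cubeLogInv t - cubeLogInv u -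
      ((-3*u^2*Real.log u - u^2) - (a*|Real.log a| + 3*a*|Real.log u| + 1)*u) * (t - u) ≤
    t * ((t - u) * (a*|Real.log a| + 3*a*|Real.log u| + 1) +
      cubeLogInv |t - u| / |t - u|) := by
  have ha : 0 < a := lt_of_lt_of_le hu hua
  have hgu : cubeLogInv u = -(u ^ 3 * Real.log u) := cubeLogInv_pos_eq hu.ne'
  rcases eq_or_ne t u with rfl | htu
  · simp [cubeLogInv]
  · have hd : t - u ≠ 0 := sub_ne_zero.mpr htu
    have hdpos : 0 < |t - u| := abs_pos.mpr hd
    have hq : cubeLogInv |t - u| / |t - u| = -((t - u) ^ 2 * Real.log |t - u|) := by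
      rw [cubeLogInv_pos_eq hdpos.ne']
      rw [show |t - u| ^ 3 = (t - u) ^ 2 * |t - u| by
        rw [← sq_abs]; ring]
      field_simp
    have hda : |t - u| ≤ a := by
      rw [abs_sub_le_iff]; constructor <;> linarith
    have h2 : t * Real.log |t - u| ≤ a * |Real.log a| := by
      rcases le_or_gt (Real.log |t - u|) 0 with h | h
      · have h1 : t * Real.log |t - u| ≤ 0 := mul_nonpos_of_nonneg_of_nonpos ht0 h
        have h2 : (0:ℝ) ≤ a * |Real.log a| := by positivity
        linarith
      · have hlog : Real.log |t - u| ≤ Real.log a := Real.log_le_log hdpos hda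
        calc t * Real.log |t - u| ≤ a * Real.log |t - u| :=
              mul_le_mul_of_nonneg_right hta h.le
          _ ≤ a * Real.log a := mul_le_mul_of_nonneg_left hlog ha.le
          _ ≤ a * |Real.log a| := mul_le_mul_of_nonneg_left (le_abs_self _) ha.le
    have h3 : (t + 2*u) * (-Real.log u) ≤ 3*a*|Real.log u| := by
      have h3a : -Real.log u ≤ |Real.log u| := neg_le_abs _
      nlinarith [abs_nonneg (Real.log u), ht0, hu.le, hta, hua]
    rcases eq_or_lt_of_le ht0 with h | h
    · -- t = 0
      have ht : t = 0 := h.symm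
      subst ht
      rw [hgu, zero_mul, show cubeLogInv (0:ℝ) = 0 from by simp [cubeLogInv]]
      have hh1 : 2*u^3*(-Real.log u) ≤ 2*u^3*|Real.log u| :=
        mul_le_mul_of_nonneg_left (neg_le_abs _) (by positivity)
      have h2u : 2*u^3 ≤ 3*a*u^2 := by
        nlinarith [mul_nonneg (sq_nonneg u) (show (0:ℝ) ≤ 3*a - 2*u by linarith)]
      have hh2 : 2*u^3*|Real.log u| ≤ 3*a*u^2*|Real.log u| :=
        mul_le_mul_of_nonneg_right h2u (abs_nonneg _)
      have hh3 : (0:ℝ) ≤ a * |Real.log a| * u ^ 2 := by positivity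
      nlinarith [hh1, hh2, hh3, pow_pos hu 3, sq_nonneg u]
    · -- 0 < t
      have hgt : cubeLogInv t = -(t ^ 3 * Real.log t) := cubeLogInv_pos_eq h.ne'
      have hlog1 : Real.log (u / t) ≤ u / t - 1 :=
        Real.log_le_sub_one_of_pos (div_pos hu h)
      rw [Real.log_div hu.ne' h.ne'] at hlog1
      have hlog2 : t * (Real.log u - Real.log t) ≤ t * (u / t - 1) :=
        mul_le_mul_of_nonneg_left hlog1 h.le
      have hcanc : t * (u / t - 1) = u - t := by field_simp
      rw [hcanc] at hlog2
      have h1 : t^3 * Real.log u - t^3 * Real.log t ≤ t^2*u - t^3 := by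
        nlinarith [mul_le_mul_of_nonneg_left hlog2 (sq_nonneg t)]
      rw [hgt, hgu, hq]
      have h2' := mul_le_mul_of_nonneg_left h2 (sq_nonneg (t - u))
      have h3' := mul_le_mul_of_nonneg_left h3 (sq_nonneg (t - u))
      have h4 : (0:ℝ) ≤ (t - u)^2 * (t + u) :=
        mul_nonneg (sq_nonneg _) (by linarith)
      nlinarith [h1, h2', h3', h4, sq_nonneg (t - u)]

/-- Example 3: the function `g(x) = x³ log(1/x)`, `g(0) = 0`, is subterzatic on
`I = [0,a]`: for each `x̄ ∈ I` there is a real number `C` such that the Jensen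
functional is bounded above as in the definition of subterzaticity
(with the convention `g(0)/0 = 0`, automatic in Lean since `g 0 / 0 = 0`). -/
theorem cubeLogInv_subterzatic (a : ℝ) :
    ∀ xbar ∈ Set.Icc (0 : ℝ) a, ∃ C : ℝ,
      ∀ (n : ℕ) (x p : Fin n → ℝ),
        (∀ i, x i ∈ Set.Icc (0 : ℝ) a) → (∀ i, 0 ≤ p i) → (∑ i, p i = 1) →
        (∑ i, p i * x i = xbar) →
        ∑ i, p i * cubeLogInv (x i) - cubeLogInv xbar ≤
          ∑ i, p i * x i * ((x i - xbar) * C +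
            cubeLogInv |x i - xbar| / |x i - xbar|) := by
  intro xbar hxbar
  rcases eq_or_lt_of_le hxbar.1 with h0 | hu
  · -- xbar = 0
    refine ⟨0, ?_⟩
    intro n x p hx hp hp1 hmean
    have hxbar0 : xbar = 0 := h0.symm
    subst hxbar0
    have hterm : ∀ i : Fin n, p i * cubeLogInv (x i) ≤
        p i * x i * ((x i - 0) * 0 + cubeLogInv |x i - 0| / |x i - 0|) := by
      intro i
      rcases eq_or_ne (x i) 0 with hxi | hxi
      · simp [hxi, cubeLogInv]
      · have hxipos : 0 < x i := lt_of_le_of_ne (hx i).1 (Ne.symm hxi)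
        have habs : |x i - 0| = x i := by
          rw [sub_zero, abs_of_pos hxipos]
        rw [habs, sub_zero, mul_zero, zero_add]
        rw [show p i * x i * (cubeLogInv (x i) / x i) =
            p i * (x i * (cubeLogInv (x i) / x i)) by ring]
        rw [mul_div_cancel₀ _ hxi]
    have hsum : ∑ i, p i * cubeLogInv (x i) ≤
        ∑ i, p i * x i * ((x i - 0) * 0 + cubeLogInv |x i - 0| / |x i - 0|) :=
      Finset.sum_le_sum (fun i _ => hterm i)
    rw [show cubeLogInv (0:ℝ) = 0 from by simp [cubeLogInv]]
    linarith [hsum]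
  · -- 0 < xbar
    set C : ℝ := a*|Real.log a| + 3*a*|Real.log xbar| + 1 with hC
    refine ⟨C, ?_⟩
    intro n x p hx hp hp1 hmean
    set L : ℝ := (-3*xbar^2*Real.log xbar - xbar^2) - C*xbar with hL
    have hterm : ∀ i : Fin n,
        p i * (cubeLogInv (x i) - cubeLogInv xbar - L * (x i - xbar)) ≤
        p i * x i * ((x i - xbar) * C + cubeLogInv |x i - xbar| / |x i - xbar|) := by
      intro i
      have key := cubeLogInv_pointwise a xbar hu hxbar.2 (x i) (hx i).1 (hx i).2
      rw [← hC] at key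
      rw [← hL] at key
      calc p i * (cubeLogInv (x i) - cubeLogInv xbar - L * (x i - xbar))
          ≤ p i * (x i * ((x i - xbar) * C + cubeLogInv |x i - xbar| / |x i - xbar|)) :=
            mul_le_mul_of_nonneg_left key (hp i)
        _ = p i * x i * ((x i - xbar) * C + cubeLogInv |x i - xbar| / |x i - xbar|) := by
            ring
    have hsum : ∑ i, p i * (cubeLogInv (x i) - cubeLogInv xbar - L * (x i - xbar)) ≤
        ∑ i, p i * x i * ((x i - xbar) * C + cubeLogInv |x i - xbar| / |x i - xbar|) :=
      Finset.sum_le_sum (fun i _ => hterm i)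
    have hexp : ∑ i, p i * (cubeLogInv (x i) - cubeLogInv xbar - L * (x i - xbar)) =
        ∑ i, p i * cubeLogInv (x i) - cubeLogInv xbar := by
      have e : ∀ i : Fin n,
          p i * (cubeLogInv (x i) - cubeLogInv xbar - L * (x i - xbar)) =
          p i * cubeLogInv (x i) - cubeLogInv xbar * p i - L * (p i * x i) +
            (L * xbar) * p i := fun i => by ring
      rw [Finset.sum_congr rfl (fun i _ => e i)]
      rw [Finset.sum_add_distrib, Finset.sum_sub_distrib, Finset.sum_sub_distrib,
        ← Finset.mul_sum, ← Finset.mul_sum, ← Finset.mul_sum, hp1, hmean]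
      ring
    linarith [hsum, hexp.symm.le, hexp.le]
end
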